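/- arXiv:1807.09740 — 2 statements merged into one kernel-verified Lean document; each statement's English description precedes it below -/
import Mathlib

section
/- Let X be a centered Gaussian process on [0,∞), self-similar of order β ∈ (0,1), with covariance E[X(s)X(t)] = s^{2β} φ(t/s) for 0 < s ≤ t, where φ(x) = E[X(1)X(x)]. Assume (H.1) holds: φ(x) = −λ(x−1)^α + ψ(x) with λ > 0, 0 < α ≤ 2β, and ψ twice differentiable on a neighborhood of [1,∞) with |ψ'(x)| ≤ C x^{α−1} for x > 1. Then for s ≥ 1, E[(X(s+1) − X(s))²] = 2λ s^{2β−α}(1 + u₁(s)) where u₁ is continuous and, for any η > 0, |u₁(s)| ≤ C_η s^{−δ₁} for s ≥ η, with δ₁ = 1−α if α < 1 and δ₁ = 2−α if α ≥ 1 (assuming additionally |ψ''(x)| ≤ C x^{−1}(x−1)^{α−1} and ψ'(1) = βψ(1) when α ≥ 1). -/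
open MeasureTheory Set

/-!
Expanding the square with the covariance at `(s, s)`, `(s + 1, s + 1)` and `(s, s + 1)`, the
singular part of `φ` contributes exactly `2λ s^{2β-α}` and the smooth part `s^{2β} F(1/s)`, where
`F h = ψ 1 ((1 + h)^{2β} + 1) - 2 ψ (1 + h)`. Since `F 0 = 0`, and `F' 0 = 0` once
`ψ' 1 = β ψ 1`, the mean value theorem applied once (`α < 1`) or twice (`α ≥ 1`), together with
the growth bounds on `ψ'` and `ψ''`, gives `|F h| ≤ M h` resp. `|F h| ≤ M h²` on `(0, 1]`.
Hence `u₁ s = s^α F(1/s) / (2λ)` decays like `s^{-δ₁}`; it is frozen at its value at `s = 1`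
for `s < 1`, since `s^α F(1/s)` may blow up as `s → 0`.
-/

section MeanValue

variable {f f' f'' : ℝ → ℝ} {M h : ℝ}

theorem abs_sub_le_of_abs_deriv_le (hh : 0 < h) (hf : ∀ x ∈ Icc 0 h, HasDerivAt f (f' x) x)
    (hM : ∀ x ∈ Ioo 0 h, |f' x| ≤ M) : |f h - f 0| ≤ M * h := by
  obtain ⟨c, hc, hslope⟩ := exists_hasDerivAt_eq_slope f f' hh
    (fun x hx => (hf x hx).continuousAt.continuousWithinAt)
    (fun x hx => hf x (Ioo_subset_Icc_self hx))
  rw [sub_zero, eq_div_iff hh.ne'] at hslope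
  rw [← hslope, abs_mul, abs_of_pos hh]
  exact mul_le_mul_of_nonneg_right (hM c hc) hh.le

theorem abs_le_mul_sq_of_abs_deriv_deriv_le (hh : 0 < h) (hf0 : f 0 = 0) (hf'0 : f' 0 = 0)
    (hf : ∀ x ∈ Icc 0 h, HasDerivAt f (f' x) x) (hf' : ∀ x ∈ Icc 0 h, HasDerivAt f' (f'' x) x)
    (hM : ∀ x ∈ Ioo 0 h, |f'' x| ≤ M) : |f h| ≤ M * h ^ 2 := by
  have hM0 : 0 ≤ M := (abs_nonneg _).trans (hM (h / 2) ⟨by positivity, by linarith⟩)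
  have hf'_le : ∀ x ∈ Ioo 0 h, |f' x| ≤ M * h := by
    intro x hx
    have hx' := abs_sub_le_of_abs_deriv_le hx.1
      (fun y hy => hf' y ⟨hy.1, hy.2.trans hx.2.le⟩) (fun y hy => hM y ⟨hy.1, hy.2.trans hx.2⟩)
    rw [hf'0, sub_zero] at hx'
    exact hx'.trans (mul_le_mul_of_nonneg_left hx.2.le hM0)
  simpa [hf0, sq, mul_assoc] using abs_sub_le_of_abs_deriv_le hh hf hf'_le

end MeanValue

theorem hasDerivAt_deriv_of_contDiffOn_two {f : ℝ → ℝ} {U : Set ℝ} (hU : IsOpen U)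
    (hf : ContDiffOn ℝ 2 f U) {x : ℝ} (hx : x ∈ U) :
    HasDerivAt f (deriv f x) x ∧ HasDerivAt (deriv f) (deriv (deriv f) x) x :=
  ⟨((hf.differentiableOn (by norm_num)).differentiableAt (hU.mem_nhds hx)).hasDerivAt,
    (((hf.deriv_of_isOpen hU (by norm_num : (1 : WithTop ℕ∞) + 1 ≤ 2)).differentiableOn
      one_ne_zero).differentiableAt (hU.mem_nhds hx)).hasDerivAt⟩

theorem one_add_rpow_le_two {h t : ℝ} (h0 : 0 ≤ h) (h1 : h ≤ 1) (ht : t ≤ 1) :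
    (1 + h) ^ t ≤ 2 :=
  calc (1 + h) ^ t ≤ (1 + h) ^ (1 : ℝ) := Real.rpow_le_rpow_of_exponent_le (by linarith) ht
    _ ≤ 2 := by rw [Real.rpow_one]; linarith

theorem abs_max_rpow_mul_comp_inv_le {F : ℝ → ℝ} {M α e : ℝ}
    (hF : ∀ h ∈ Ioc (0 : ℝ) 1, |F h| ≤ M * h ^ e) (hαe : α ≤ e) {s : ℝ} (hs : 0 < s) :
    |max s 1 ^ α * F (max s 1)⁻¹| ≤ M * s ^ (α - e) := by
  have hM : 0 ≤ M := by simpa using (abs_nonneg _).trans (hF 1 ⟨one_pos, le_rfl⟩)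
  set t := max s 1
  have ht : 1 ≤ t := le_max_right s 1
  have ht0 : 0 < t := one_pos.trans_le ht
  have hF_inv := hF t⁻¹ ⟨inv_pos.2 ht0, inv_le_one_of_one_le₀ ht⟩
  rw [Real.inv_rpow ht0.le] at hF_inv
  calc |t ^ α * F t⁻¹| = t ^ α * |F t⁻¹| := by
        rw [abs_mul, abs_of_pos (Real.rpow_pos_of_pos ht0 α)]
    _ ≤ t ^ α * (M * (t ^ e)⁻¹) := by gcongr
    _ = M * t ^ (α - e) := by rw [Real.rpow_sub ht0]; ring
    _ ≤ M * s ^ (α - e) := mul_le_mul_of_nonneg_left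
        (Real.rpow_le_rpow_of_nonpos hs (le_max_left s 1) (by linarith)) hM

noncomputable def incrementCorrection (β : ℝ) (ψ : ℝ → ℝ) (h : ℝ) : ℝ :=
  ψ 1 * ((1 + h) ^ (2 * β) + 1) - 2 * ψ (1 + h)

section IncrementCorrection

variable {β α C : ℝ} {ψ : ℝ → ℝ} {h : ℝ}

theorem incrementCorrection_zero : incrementCorrection β ψ 0 = 0 := by
  simp only [incrementCorrection, add_zero, Real.one_rpow]
  ring

theorem hasDerivAt_incrementCorrection (hh : 0 < 1 + h)
    (hψ : HasDerivAt ψ (deriv ψ (1 + h)) (1 + h)) :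
    HasDerivAt (incrementCorrection β ψ)
      (2 * β * ψ 1 * (1 + h) ^ (2 * β - 1) - 2 * deriv ψ (1 + h)) h := by
  have hpow := (Real.hasDerivAt_rpow_const (p := 2 * β) (Or.inl hh.ne')).comp_const_add 1 h
  refine (((hpow.add_const 1).const_mul (ψ 1)).sub
    ((hψ.comp_const_add 1 h).const_mul 2)).congr_deriv ?_
  ring

theorem hasDerivAt_incrementCorrection_deriv (hh : 0 < 1 + h)
    (hψ' : HasDerivAt (deriv ψ) (deriv (deriv ψ) (1 + h)) (1 + h)) :
    HasDerivAt (fun x => 2 * β * ψ 1 * (1 + x) ^ (2 * β - 1) - 2 * deriv ψ (1 + x))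
      (2 * β * (2 * β - 1) * ψ 1 * (1 + h) ^ (2 * β - 2) - 2 * deriv (deriv ψ) (1 + h)) h := by
  have hpow := (Real.hasDerivAt_rpow_const (p := 2 * β - 1) (Or.inl hh.ne')).comp_const_add 1 h
  refine ((hpow.const_mul (2 * β * ψ 1)).sub
    ((hψ'.comp_const_add 1 h).const_mul 2)).congr_deriv ?_
  ring_nf

theorem abs_incrementCorrection_deriv_le (hβ : β ∈ Icc 0 1) (hα : α ≤ 2) (hC : 0 ≤ C)
    (hψ' : ∀ x : ℝ, 1 < x → |deriv ψ x| ≤ C * x ^ (α - 1)) (h0 : 0 < h) (h1 : h ≤ 1) :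
    |2 * β * ψ 1 * (1 + h) ^ (2 * β - 1) - 2 * deriv ψ (1 + h)| ≤ 4 * (|ψ 1| + C) := by
  have hpow : 0 ≤ (1 + h) ^ (2 * β - 1) := by positivity
  have hpow_le := one_add_rpow_le_two h0.le h1 (by linarith [hβ.2] : 2 * β - 1 ≤ 1)
  have hψ'_le : |deriv ψ (1 + h)| ≤ 2 * C := by
    refine (hψ' _ (by linarith)).trans ?_
    rw [mul_comm 2 C]
    exact mul_le_mul_of_nonneg_left (one_add_rpow_le_two h0.le h1 (by linarith)) hC
  have hψ1 : |2 * β * ψ 1 * (1 + h) ^ (2 * β - 1)| ≤ 4 * |ψ 1| := by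
    rw [abs_mul, abs_mul, abs_of_nonneg hpow, abs_of_nonneg (by linarith [hβ.1] : 0 ≤ 2 * β)]
    calc 2 * β * |ψ 1| * (1 + h) ^ (2 * β - 1) ≤ 2 * 1 * |ψ 1| * 2 := by gcongr; exact hβ.2
      _ = 4 * |ψ 1| := by ring
  calc _ ≤ |2 * β * ψ 1 * (1 + h) ^ (2 * β - 1)| + |2 * deriv ψ (1 + h)| := abs_sub _ _
    _ ≤ 4 * (|ψ 1| + C) := by rw [abs_mul 2, abs_two]; linarith

theorem abs_incrementCorrection_deriv_deriv_le (hβ : β ∈ Icc 0 1) (hα : 1 ≤ α) (hC : 0 ≤ C)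
    (hψ'' : ∀ x : ℝ, 1 < x → |deriv (deriv ψ) x| ≤ C * x⁻¹ * (x - 1) ^ (α - 1))
    (h0 : 0 < h) (h1 : h ≤ 1) :
    |2 * β * (2 * β - 1) * ψ 1 * (1 + h) ^ (2 * β - 2) - 2 * deriv (deriv ψ) (1 + h)| ≤
      4 * (|ψ 1| + C) := by
  have hpow : 0 ≤ (1 + h) ^ (2 * β - 2) := by positivity
  have hpow_le : (1 + h) ^ (2 * β - 2) ≤ 1 :=
    Real.rpow_le_one_of_one_le_of_nonpos (by linarith) (by linarith [hβ.2])
  have hcoeff : |2 * β * (2 * β - 1)| ≤ 2 := by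
    rw [abs_le]; constructor <;> nlinarith [hβ.1, hβ.2]
  have hψ''_le : |deriv (deriv ψ) (1 + h)| ≤ C := by
    refine (hψ'' _ (by linarith)).trans ?_
    rw [add_sub_cancel_left, mul_assoc]
    have hinv : (1 + h)⁻¹ ≤ 1 := inv_le_one_of_one_le₀ (by linarith)
    have hh_pow : h ^ (α - 1) ≤ 1 := Real.rpow_le_one h0.le h1 (by linarith)
    calc C * ((1 + h)⁻¹ * h ^ (α - 1)) ≤ C * (1 * 1) := by gcongr
      _ = C := by ring
  have hψ1 : |2 * β * (2 * β - 1) * ψ 1 * (1 + h) ^ (2 * β - 2)| ≤ 2 * |ψ 1| := by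
    rw [abs_mul, abs_mul, abs_of_nonneg hpow]
    calc |2 * β * (2 * β - 1)| * |ψ 1| * (1 + h) ^ (2 * β - 2) ≤ 2 * |ψ 1| * 1 := by gcongr
      _ = 2 * |ψ 1| := mul_one _
  calc _ ≤ |2 * β * (2 * β - 1) * ψ 1 * (1 + h) ^ (2 * β - 2)| +
        |2 * deriv (deriv ψ) (1 + h)| := abs_sub _ _
    _ ≤ 4 * (|ψ 1| + C) := by rw [abs_mul 2, abs_two]; linarith [abs_nonneg (ψ 1)]

theorem abs_incrementCorrection_le (hβ : β ∈ Icc 0 1) (hα : α ≤ 2) (hC : 0 ≤ C)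
    (hψ₁ : ∀ x : ℝ, 1 ≤ x → HasDerivAt ψ (deriv ψ x) x)
    (hψ₂ : ∀ x : ℝ, 1 ≤ x → HasDerivAt (deriv ψ) (deriv (deriv ψ) x) x)
    (hψ' : ∀ x : ℝ, 1 < x → |deriv ψ x| ≤ C * x ^ (α - 1))
    (hψ'' : 1 ≤ α → ∀ x : ℝ, 1 < x → |deriv (deriv ψ) x| ≤ C * x⁻¹ * (x - 1) ^ (α - 1))
    (hψ1 : 1 ≤ α → deriv ψ 1 = β * ψ 1) (h0 : 0 < h) (h1 : h ≤ 1) :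
    |incrementCorrection β ψ h| ≤ 4 * (|ψ 1| + C) * h ^ (if α < 1 then (1 : ℝ) else 2) := by
  have hF : ∀ x ∈ Icc 0 h, HasDerivAt (incrementCorrection β ψ)
      (2 * β * ψ 1 * (1 + x) ^ (2 * β - 1) - 2 * deriv ψ (1 + x)) x :=
    fun x hx => hasDerivAt_incrementCorrection (by linarith [hx.1]) (hψ₁ _ (by linarith [hx.1]))
  split_ifs with hα1
  · simpa [incrementCorrection_zero] using abs_sub_le_of_abs_deriv_le h0 hF
      fun x hx => abs_incrementCorrection_deriv_le hβ hα hC hψ' hx.1 (hx.2.le.trans h1)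
  · rw [not_lt] at hα1
    rw [Real.rpow_two]
    refine abs_le_mul_sq_of_abs_deriv_deriv_le h0 incrementCorrection_zero ?_ hF
      (fun x hx => hasDerivAt_incrementCorrection_deriv (by linarith [hx.1])
        (hψ₂ _ (by linarith [hx.1])))
      fun x hx => abs_incrementCorrection_deriv_deriv_le hβ hα1 hC (hψ'' hα1) hx.1
        (hx.2.le.trans h1)
    simp only [add_zero, Real.one_rpow, hψ1 hα1]
    ring

theorem continuous_max_rpow_mul_incrementCorrection_inv
    (hψ₁ : ∀ x : ℝ, 1 ≤ x → HasDerivAt ψ (deriv ψ x) x) :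
    Continuous fun s => max s 1 ^ α * incrementCorrection β ψ (max s 1)⁻¹ := by
  have hmax : Continuous fun s : ℝ => max s 1 := continuous_id.max continuous_const
  have hmax_pos (s : ℝ) : 0 < max s 1 := one_pos.trans_le (le_max_right s 1)
  have hF : ContinuousOn (incrementCorrection β ψ) (Ici 0) := fun x hx =>
    (hasDerivAt_incrementCorrection (by linarith [mem_Ici.1 hx])
      (hψ₁ _ (by linarith [mem_Ici.1 hx]))).continuousAt.continuousWithinAt
  exact (hmax.rpow_const fun s => Or.inl (hmax_pos s).ne').mul <| hF.comp_continuous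
    (hmax.inv₀ fun s => (hmax_pos s).ne') fun s => mem_Ici.2 (inv_nonneg.2 (hmax_pos s).le)

end IncrementCorrection

theorem integral_sub_sq_eq {Ω : Type*} [MeasurableSpace Ω] {μ : Measure Ω} {Y Z : Ω → ℝ}
    (hY : Integrable (fun ω => Y ω * Y ω) μ) (hZ : Integrable (fun ω => Z ω * Z ω) μ)
    (hZY : Integrable (fun ω => Z ω * Y ω) μ) :
    ∫ ω, (Y ω - Z ω) ^ 2 ∂μ =
      ∫ ω, Y ω * Y ω ∂μ + ∫ ω, Z ω * Z ω ∂μ - 2 * ∫ ω, Z ω * Y ω ∂μ := by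
  calc ∫ ω, (Y ω - Z ω) ^ 2 ∂μ = ∫ ω, (Y ω * Y ω + Z ω * Z ω) - 2 * (Z ω * Y ω) ∂μ := by
        congr 1; funext ω; ring
    _ = _ := by
        rw [integral_sub (f := fun ω => Y ω * Y ω + Z ω * Z ω) (hY.add hZ) (hZY.const_mul 2),
          integral_add hY hZ, integral_const_mul]

theorem integral_sq_unit_increment_eq {Ω : Type*} [MeasurableSpace Ω] {P : Measure Ω}
    {X : ℝ → Ω → ℝ} {β lam α : ℝ} {ψ : ℝ → ℝ} (hα : 0 < α)
    (hInt : ∀ s t : ℝ, Integrable (fun ω => X s ω * X t ω) P)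
    (hcov : ∀ s t : ℝ, 0 < s → s ≤ t →
      ∫ ω, X s ω * X t ω ∂P = s ^ (2 * β) * (-lam * (t / s - 1) ^ α + ψ (t / s)))
    {s : ℝ} (hs : 0 < s) :
    ∫ ω, (X (s + 1) ω - X s ω) ^ 2 ∂P =
      2 * lam * s ^ (2 * β - α) + s ^ (2 * β) * incrementCorrection β ψ s⁻¹ := by
  have hs1 : 0 < s + 1 := by linarith
  have hdiv : (s + 1) / s = 1 + s⁻¹ := by field_simp
  have hpow : (s + 1) ^ (2 * β) = s ^ (2 * β) * (1 + s⁻¹) ^ (2 * β) := by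
    rw [← Real.mul_rpow hs.le (by positivity), mul_add, mul_inv_cancel₀ hs.ne', mul_one]
  have hsing : s ^ (2 * β) * s⁻¹ ^ α = s ^ (2 * β - α) := by
    rw [Real.inv_rpow hs.le, Real.rpow_sub hs, div_eq_mul_inv]
  rw [integral_sub_sq_eq (hInt _ _) (hInt _ _) (hInt _ _), hcov _ _ hs1 le_rfl,
    hcov _ _ hs le_rfl, hcov _ _ hs (by linarith), div_self hs1.ne', div_self hs.ne', hdiv,
    sub_self, add_sub_cancel_left, Real.zero_rpow hα.ne', hpow, incrementCorrection]
  linear_combination (2 * lam) * hsing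

theorem variance_unit_increment_selfsimilar_general {Ω : Type*} [MeasurableSpace Ω]
    (P : Measure Ω) (X : ℝ → Ω → ℝ)
    (β lam α C : ℝ) (ψ : ℝ → ℝ)
    (hβ : β ∈ Set.Ioo (0 : ℝ) 1) (hlam : 0 < lam) (hα : 0 < α) (hαβ : α ≤ 2 * β)
    (hC : 0 ≤ C)
    (hInt : ∀ s t : ℝ, Integrable (fun ω => X s ω * X t ω) P)
    (hcov : ∀ s t : ℝ, 0 < s → s ≤ t →
      ∫ ω, X s ω * X t ω ∂P = s ^ (2 * β) * (-lam * (t / s - 1) ^ α + ψ (t / s)))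
    (hψsmooth : ∃ U : Set ℝ, IsOpen U ∧ Set.Ici (1 : ℝ) ⊆ U ∧ ContDiffOn ℝ 2 ψ U)
    (hψ' : ∀ x : ℝ, 1 < x → |deriv ψ x| ≤ C * x ^ (α - 1))
    (hψ'' : 1 ≤ α → ∀ x : ℝ, 1 < x → |deriv (deriv ψ) x| ≤ C * x⁻¹ * (x - 1) ^ (α - 1))
    (hψ1 : 1 ≤ α → deriv ψ 1 = β * ψ 1) :
    ∃ u₁ : ℝ → ℝ, ContinuousOn u₁ (Set.Ici (0 : ℝ)) ∧
      (∀ s : ℝ, 1 ≤ s →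
        ∫ ω, (X (s + 1) ω - X s ω) ^ 2 ∂P = 2 * lam * s ^ (2 * β - α) * (1 + u₁ s)) ∧
      (∀ η : ℝ, 0 < η → ∃ Cη > 0, ∀ s : ℝ, η ≤ s →
        |u₁ s| ≤ Cη * s ^ (-(if α < 1 then 1 - α else 2 - α))) := by
  obtain ⟨U, hU, hU1, hψU⟩ := hψsmooth
  have hψ₁ (x : ℝ) (hx : 1 ≤ x) := (hasDerivAt_deriv_of_contDiffOn_two hU hψU (hU1 hx)).1
  have hψ₂ (x : ℝ) (hx : 1 ≤ x) := (hasDerivAt_deriv_of_contDiffOn_two hU hψU (hU1 hx)).2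
  have hα2 : α ≤ 2 := by linarith [hβ.2]
  set M := 4 * (|ψ 1| + C)
  set e : ℝ := if α < 1 then 1 else 2
  have hF : ∀ h ∈ Ioc (0 : ℝ) 1, |incrementCorrection β ψ h| ≤ M * h ^ e := fun h hh =>
    abs_incrementCorrection_le (Ioo_subset_Icc_self hβ) hα2 hC hψ₁ hψ₂ hψ' hψ'' hψ1 hh.1 hh.2
  have hαe : α ≤ e := by simp only [e]; split_ifs <;> linarith
  have hδ : -(if α < 1 then 1 - α else 2 - α) = α - e := by simp only [e]; split_ifs <;> ring
  refine ⟨fun s => max s 1 ^ α * incrementCorrection β ψ (max s 1)⁻¹ / (2 * lam),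
    ((continuous_max_rpow_mul_incrementCorrection_inv hψ₁).div_const _).continuousOn,
    fun s hs => ?_, fun η hη => ⟨(M + 1) / (2 * lam), by positivity, fun s hs => ?_⟩⟩
  · have hs0 : 0 < s := one_pos.trans_le hs
    dsimp only
    rw [max_eq_left hs, integral_sq_unit_increment_eq hα hInt hcov hs0, Real.rpow_sub hs0]
    field_simp
  · rw [hδ, abs_div, abs_of_pos (by positivity : 0 < 2 * lam), div_le_iff₀ (by positivity)]
    calc _ ≤ M * s ^ (α - e) := abs_max_rpow_mul_comp_inv_le hF hαe (hη.trans_le hs)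
      _ ≤ (M + 1) * s ^ (α - e) :=
        mul_le_mul_of_nonneg_right (by linarith) (Real.rpow_nonneg (hη.le.trans hs) _)
      _ = _ := by field_simp

/-- Lemma 4.1 of Campese–Nourdin–Nualart: for a centered Gaussian self-similar
process `X` of order `β ∈ (0,1)` with covariance `E[X(s)X(t)] = s^{2β} φ(t/s)`
for `0 < s ≤ t`, where `φ(x) = −λ(x−1)^α + ψ(x)` satisfies hypothesis (H.1),
there is a continuous function `u₁` with
`E[(X(s+1)−X(s))²] = 2λ s^{2β−α}(1+u₁(s))` for `s ≥ 1`, and for every `η > 0`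
a constant `C_η > 0` with `|u₁(s)| ≤ C_η s^{−δ₁}` for `s ≥ η`, where
`δ₁ = 1−α` if `α < 1` and `δ₁ = 2−α` if `α ≥ 1`. -/
theorem variance_unit_increment_selfsimilar {Ω : Type*} [MeasurableSpace Ω]
    (P : Measure Ω) [IsProbabilityMeasure P] (X : ℝ → Ω → ℝ)
    (β lam α C : ℝ) (ψ : ℝ → ℝ)
    (hβ : β ∈ Set.Ioo (0 : ℝ) 1) (hlam : 0 < lam) (hα : 0 < α) (hαβ : α ≤ 2 * β)
    (hC : 0 ≤ C)
    (hmean : ∀ t : ℝ, ∫ ω, X t ω ∂P = 0)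
    (hInt : ∀ s t : ℝ, Integrable (fun ω => X s ω * X t ω) P)
    (hcov : ∀ s t : ℝ, 0 < s → s ≤ t →
      ∫ ω, X s ω * X t ω ∂P = s ^ (2 * β) * (-lam * (t / s - 1) ^ α + ψ (t / s)))
    (hψsmooth : ∃ U : Set ℝ, IsOpen U ∧ Set.Ici (1 : ℝ) ⊆ U ∧ ContDiffOn ℝ 2 ψ U)
    (hψ' : ∀ x : ℝ, 1 < x → |deriv ψ x| ≤ C * x ^ (α - 1))
    (hψ'' : 1 ≤ α → ∀ x : ℝ, 1 < x → |deriv (deriv ψ) x| ≤ C * x⁻¹ * (x - 1) ^ (α - 1))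
    (hψ1 : 1 ≤ α → deriv ψ 1 = β * ψ 1) :
    ∃ u₁ : ℝ → ℝ, ContinuousOn u₁ (Set.Ici (0 : ℝ)) ∧
      (∀ s : ℝ, 1 ≤ s →
        ∫ ω, (X (s + 1) ω - X s ω) ^ 2 ∂P = 2 * lam * s ^ (2 * β - α) * (1 + u₁ s)) ∧
      (∀ η : ℝ, 0 < η → ∃ Cη > 0, ∀ s : ℝ, η ≤ s →
        |u₁ s| ≤ Cη * s ^ (-(if α < 1 then 1 - α else 2 - α))) :=
  variance_unit_increment_selfsimilar_general P X β lam α C ψ hβ hlam hα hαβ hC hInt hcov hψsmooth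
    hψ' hψ'' hψ1
end

section
/- If β ∈ (0,1), α ∈ (0, 2β] with α > 2 − 1/d and d ≥ 1, then the double integral ∫_0^s ∫_0^t ((u∨v)^{α−2}(uv)^{−β+α/2})^d du dv is finite for all s, t > 0. -/
open MeasureTheory Real Set

/-- If `d ≥ 1`, `β ∈ (0,1)`, `α ∈ (0,2β]` and `α > 2 − 1/d`, then
`∫_0^s ∫_0^t ((u∨v)^{α−2}(uv)^{−β+α/2})^d du dv < ∞` for all `s,t > 0`. -/
theorem integrable_hermite_process_kernel (d : ℕ) (hd : 1 ≤ d) (β α : ℝ)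
    (hβ : β ∈ Set.Ioo (0 : ℝ) 1) (hα : 0 < α) (hαβ : α ≤ 2 * β)
    (hαd : 2 - 1 / (d : ℝ) < α) (s t : ℝ) (hs : 0 < s) (ht : 0 < t) :
    MeasureTheory.IntegrableOn
      (fun p : ℝ × ℝ => ((max p.1 p.2) ^ (α - 2) * (p.1 * p.2) ^ (-β + α / 2)) ^ d)
      (Set.Ioc 0 s ×ˢ Set.Ioc 0 t) := by
  have hd0 : (0 : ℝ) < d := by exact_mod_cast hd
  set P : ℝ := (d : ℝ) * (α - 1 - β) with hP
  have hP1 : (-1 : ℝ) < P := by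
    have h1 : α - 2 > -(1 / (d : ℝ)) := by linarith
    have h2 : α - 1 - β > α - 2 := by linarith [hβ.2]
    have : (d : ℝ) * (α - 1 - β) > (d : ℝ) * (α - 2) := by
      exact mul_lt_mul_of_pos_left h2 hd0
    have h3 : (d : ℝ) * (α - 2) > (d : ℝ) * (-(1 / (d : ℝ))) :=
      mul_lt_mul_of_pos_left h1 hd0
    have h4 : (d : ℝ) * (-(1 / (d : ℝ))) = -1 := by
      field_simp
    linarith
  -- the dominating function
  have h1 : IntegrableOn (fun u : ℝ => u ^ P) (Ioc 0 s) :=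
    (intervalIntegral.intervalIntegrable_rpow' hP1).1
  have h2 : IntegrableOn (fun v : ℝ => v ^ P) (Ioc 0 t) :=
    (intervalIntegral.intervalIntegrable_rpow' hP1).1
  have hg : IntegrableOn (fun p : ℝ × ℝ => p.1 ^ P * p.2 ^ P)
      (Set.Ioc 0 s ×ˢ Set.Ioc 0 t) := by
    rw [IntegrableOn, Measure.volume_eq_prod, ← Measure.prod_restrict]
    exact h1.mul_prod h2
  refine hg.integrable.mono' ?_ ?_
  · apply Measurable.aestronglyMeasurable
    exact (((measurable_fst.max measurable_snd).pow measurable_const).mul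
      ((measurable_fst.mul measurable_snd).pow measurable_const)).pow_const _
  · filter_upwards [ae_restrict_mem ((measurableSet_Ioc).prod measurableSet_Ioc)]
      with p hp
    obtain ⟨⟨hu0, hus⟩, hv0, hvt⟩ := hp
    set u := p.1
    set v := p.2
    have hm : 0 < max u v := lt_max_of_lt_left hu0
    have huv : 0 < u * v := mul_pos hu0 hv0
    have hnn : 0 ≤ (max u v) ^ (α - 2) * (u * v) ^ (-β + α / 2) :=
      mul_nonneg (rpow_nonneg hm.le _) (rpow_nonneg huv.le _)
    rw [norm_eq_abs, abs_of_nonneg (pow_nonneg hnn _)]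
    -- rewrite in rpow form
    have key : ((max u v) ^ (α - 2) * (u * v) ^ (-β + α / 2)) ^ d
        = (max u v) ^ ((α - 2) * d) * (u * v) ^ ((-β + α / 2) * d) := by
      rw [mul_pow, ← rpow_natCast ((max u v) ^ (α - 2)) d,
        ← rpow_natCast ((u * v) ^ (-β + α / 2)) d,
        ← rpow_mul hm.le, ← rpow_mul huv.le]
    rw [key]
    have hsqrt : (u * v) ^ ((1 : ℝ) / 2) ≤ max u v := by
      have huv2 : u * v ≤ max u v * max u v :=
        mul_le_mul (le_max_left _ _) (le_max_right _ _) hv0.le hm.le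
      calc (u * v) ^ ((1 : ℝ) / 2) ≤ (max u v * max u v) ^ ((1 : ℝ) / 2) :=
            rpow_le_rpow huv.le huv2 (by norm_num)
        _ = max u v := by
            rw [← Real.sqrt_eq_rpow, Real.sqrt_mul_self hm.le]
    have hq : (α - 2) * (d : ℝ) ≤ 0 := by
      nlinarith [hβ.2]
    have hmono : (max u v) ^ ((α - 2) * (d : ℝ))
        ≤ ((u * v) ^ ((1 : ℝ) / 2)) ^ ((α - 2) * (d : ℝ)) :=
      rpow_le_rpow_of_nonpos (rpow_pos_of_pos huv _) hsqrt hq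
    have hrw : ((u * v) ^ ((1 : ℝ) / 2)) ^ ((α - 2) * (d : ℝ))
        = (u * v) ^ ((1 : ℝ) / 2 * ((α - 2) * d)) := by
      rw [← rpow_mul huv.le]
    calc (max u v) ^ ((α - 2) * (d : ℝ)) * (u * v) ^ ((-β + α / 2) * (d : ℝ))
        ≤ (u * v) ^ ((1 : ℝ) / 2 * ((α - 2) * d)) * (u * v) ^ ((-β + α / 2) * (d : ℝ)) := by
          rw [← hrw]
          exact mul_le_mul_of_nonneg_right hmono (rpow_nonneg huv.le _)
      _ = (u * v) ^ P := by
          rw [← rpow_add huv]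
          congr 1
          ring
      _ = u ^ P * v ^ P := mul_rpow hu0.le hv0.le
end
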